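/- The sliced p-Wasserstein distance separates probability measures: for p ∈ [1,∞) and Borel probability measures μ, ν on ℝ^d with finite p-th moment, if SW_p(μ,ν) = 0, i.e., the p-Wasserstein distance between the pushforwards of μ and ν under x ↦ ⟨θ, x⟩ vanishes for almost every θ with respect to the uniform measure on the unit sphere S^{d−1}, then μ = ν. -/

import Mathlib

/-!
If `W_p` vanishes on a slice then so does `W_1 ≤ W_p`, and the easy half of Kantorovich–Rubinstein
duality makes the two slices integrate every Lipschitz function equally, in particular every
thickened indicator of a closed set; hence almost every slice of `μ` equals that of `ν`. As
`charFun μ (t • θ)` is the characteristic function of the slice in direction `θ`, the characteristic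
functions of `μ` and `ν` then agree along every direction of a closed set of full `σ`-measure, which
contains the support of `σ`. Reflections act transitively on the unit sphere, so an invariant
measure charging the sphere has the whole sphere in its support (Cramér–Wold).
-/

open MeasureTheory ENNReal

/-- The `p`-Wasserstein distance between two measures, defined as the infimum over all
couplings (probability measures on the product whose marginals are `μ` and `ν`) of
`(∫ d(x,y)^p dγ)^(1/p)`. -/
noncomputable def wassersteinDist {X : Type*} [MeasurableSpace X] [PseudoMetricSpace X]
    (p : ℝ) (μ ν : Measure X) : ℝ≥0∞ :=
  (⨅ γ ∈ {γ : Measure (X × X) | IsProbabilityMeasure γ ∧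
      γ.map Prod.fst = μ ∧ γ.map Prod.snd = ν},
    ∫⁻ q, ENNReal.ofReal (dist q.1 q.2 ^ p) ∂γ) ^ (1 / p)

open scoped NNReal
open Metric Set

section Couplings

variable {X : Type*} [MeasurableSpace X]

noncomputable def couplings (μ ν : Measure X) : Set (Measure (X × X)) :=
  {γ | IsProbabilityMeasure γ ∧ γ.map Prod.fst = μ ∧ γ.map Prod.snd = ν}

lemma prod_mem_couplings (μ ν : Measure X) [IsProbabilityMeasure μ] [IsProbabilityMeasure ν] :
    μ.prod ν ∈ couplings μ ν :=
  ⟨inferInstance, by simp, by simp⟩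

lemma map_swap_mem_couplings {μ ν : Measure X} {γ : Measure (X × X)} (hγ : γ ∈ couplings μ ν) :
    γ.map Prod.swap ∈ couplings ν μ := by
  obtain ⟨hγ, hfst, hsnd⟩ := hγ
  refine ⟨Measure.isProbabilityMeasure_map measurable_swap.aemeasurable, ?_, ?_⟩
  · rwa [Measure.map_map measurable_fst measurable_swap]
  · rwa [Measure.map_map measurable_snd measurable_swap]

end Couplings

section Wasserstein

variable {X : Type*} [MeasurableSpace X] [PseudoMetricSpace X]

noncomputable def transportCost (p : ℝ) (μ ν : Measure X) : ℝ≥0∞ :=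
  ⨅ γ ∈ couplings μ ν, ∫⁻ z, ENNReal.ofReal (dist z.1 z.2 ^ p) ∂γ

lemma wassersteinDist_eq_transportCost_rpow (p : ℝ) (μ ν : Measure X) :
    wassersteinDist p μ ν = transportCost p μ ν ^ (1 / p) :=
  rfl

lemma transportCost_le_comm (p : ℝ) (μ ν : Measure X) :
    transportCost p ν μ ≤ transportCost p μ ν := by
  refine le_iInf₂ fun γ hγ => (iInf₂_le _ (map_swap_mem_couplings hγ)).trans_eq ?_
  rw [show (Prod.swap : X × X → X × X) = MeasurableEquiv.prodComm from rfl, lintegral_map_equiv]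
  exact lintegral_congr fun z => by rw [dist_comm]; rfl

lemma transportCost_comm (p : ℝ) (μ ν : Measure X) :
    transportCost p μ ν = transportCost p ν μ :=
  le_antisymm (transportCost_le_comm p ν μ) (transportCost_le_comm p μ ν)

lemma wassersteinDist_comm (p : ℝ) (μ ν : Measure X) :
    wassersteinDist p μ ν = wassersteinDist p ν μ := by
  rw [wassersteinDist_eq_transportCost_rpow, transportCost_comm,
    wassersteinDist_eq_transportCost_rpow]

lemma eLpNorm_dist_ofReal {r : ℝ} (hr : 0 < r) (γ : Measure (X × X)) :
    eLpNorm (fun z : X × X => dist z.1 z.2) (.ofReal r) γ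
      = (∫⁻ z, ENNReal.ofReal (dist z.1 z.2 ^ r) ∂γ) ^ (1 / r) := by
  rw [eLpNorm_eq_lintegral_rpow_enorm_toReal (by simpa using hr) ofReal_ne_top,
    toReal_ofReal hr.le]
  simp_rw [Real.enorm_eq_ofReal dist_nonneg, ofReal_rpow_of_nonneg dist_nonneg hr.le]

lemma wassersteinDist_le_of_exponent_le [SecondCountableTopology X] [OpensMeasurableSpace X]
    {p q : ℝ} (hq : 0 < q) (hqp : q ≤ p) (μ ν : Measure X) :
    wassersteinDist q μ ν ≤ wassersteinDist p μ ν := by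
  have hp : 0 < p := hq.trans_le hqp
  simp only [wassersteinDist_eq_transportCost_rpow, transportCost]
  rw [← orderIsoRpow_apply _ (one_div_pos.2 hq), ← orderIsoRpow_apply _ (one_div_pos.2 hp),
    OrderIso.map_iInf₂, OrderIso.map_iInf₂]
  refine iInf₂_mono fun γ ⟨_, _⟩ => ?_
  rw [orderIsoRpow_apply, orderIsoRpow_apply, ← eLpNorm_dist_ofReal hq, ← eLpNorm_dist_ofReal hp]
  exact eLpNorm_le_eLpNorm_of_exponent_le (ofReal_le_ofReal hqp)
    (continuous_fst.dist continuous_snd).aestronglyMeasurable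

lemma lintegral_le_lintegral_add_mul_lintegral_edist [OpensMeasurableSpace X]
    {μ ν : Measure X} {γ : Measure (X × X)} (hfst : γ.map Prod.fst = μ)
    (hsnd : γ.map Prod.snd = ν) {K : ℝ≥0} {f : X → ℝ≥0} (hf : LipschitzWith K f) :
    ∫⁻ x, f x ∂μ ≤ ∫⁻ x, f x ∂ν + K * ∫⁻ z, edist z.1 z.2 ∂γ := by
  have hfm : Measurable fun x => (f x : ℝ≥0∞) := hf.continuous.measurable.coe_nnreal_ennreal
  have hpt : ∀ a b, (f a : ℝ≥0∞) ≤ f b + K * edist a b := fun a b =>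
    calc (f a : ℝ≥0∞) ≤ f b + edist (f a) (f b) := by
          rw [edist_nndist]; exact_mod_cast NNReal.le_add_nndist _ _
      _ ≤ f b + K * edist a b := by gcongr; exact hf a b
  rw [← hfst, ← hsnd, lintegral_map hfm measurable_fst, lintegral_map hfm measurable_snd,
    ← lintegral_const_mul' _ _ coe_ne_top,
    ← lintegral_add_left (f := fun z : X × X => (f z.2 : ℝ≥0∞)) (hfm.comp measurable_snd)]
  exact lintegral_mono fun z => hpt z.1 z.2

/-- The easy half of Kantorovich–Rubinstein duality. -/
lemma lintegral_le_lintegral_add_mul_wassersteinDist_one [OpensMeasurableSpace X]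
    (μ ν : Measure X) [IsProbabilityMeasure μ] [IsProbabilityMeasure ν]
    {K : ℝ≥0} {f : X → ℝ≥0} (hf : LipschitzWith K f) :
    ∫⁻ x, f x ∂μ ≤ ∫⁻ x, f x ∂ν + K * wassersteinDist 1 μ ν := by
  have : Nonempty (couplings μ ν) := ⟨⟨_, prod_mem_couplings μ ν⟩⟩
  rw [wassersteinDist_eq_transportCost_rpow, div_one, ENNReal.rpow_one, transportCost,
    iInf_subtype', ENNReal.mul_iInf (by simp), ENNReal.add_iInf]
  refine le_iInf fun ⟨γ, _, hfst, hsnd⟩ => ?_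
  simpa [← edist_dist] using lintegral_le_lintegral_add_mul_lintegral_edist hfst hsnd hf

end Wasserstein

lemma ext_of_forall_lintegral_eq_of_lipschitzWith {X : Type*} [MeasurableSpace X]
    [PseudoEMetricSpace X] [BorelSpace X] {μ ν : Measure X} [IsFiniteMeasure μ] [IsFiniteMeasure ν]
    (h : ∀ (K : ℝ≥0) (f : X → ℝ≥0), LipschitzWith K f → ∫⁻ x, f x ∂μ = ∫⁻ x, f x ∂ν) :
    μ = ν := by
  have closed_eq : ∀ F : Set X, IsClosed F → μ F = ν F := by
    intro F hF
    have hδ : ∀ n : ℕ, (0 : ℝ) < 1 / (n + 1) := fun n => Nat.one_div_pos_of_nat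
    refine tendsto_nhds_unique ?_ (tendsto_lintegral_thickenedIndicator_of_isClosed ν hF hδ
      tendsto_one_div_add_atTop_nhds_zero_nat)
    refine (tendsto_lintegral_thickenedIndicator_of_isClosed μ hF hδ
      tendsto_one_div_add_atTop_nhds_zero_nat).congr fun n => ?_
    exact h _ _ (lipschitzWith_thickenedIndicator (hδ n) F)
  refine ext_of_generate_finite _ ?_ isPiSystem_isClosed (fun F hF => closed_eq F hF)
    (closed_eq univ isClosed_univ)
  rw [BorelSpace.measurable_eq (α := X), borel_eq_generateFrom_isClosed]

lemma eq_of_wassersteinDist_eq_zero {X : Type*} [MeasurableSpace X] [PseudoMetricSpace X]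
    [BorelSpace X] [SecondCountableTopology X] {p : ℝ} (hp : 1 ≤ p)
    {μ ν : Measure X} [IsProbabilityMeasure μ] [IsProbabilityMeasure ν]
    (h : wassersteinDist p μ ν = 0) : μ = ν := by
  have h1 : wassersteinDist 1 μ ν = 0 :=
    le_zero_iff.1 (h ▸ wassersteinDist_le_of_exponent_le one_pos hp μ ν)
  refine ext_of_forall_lintegral_eq_of_lipschitzWith fun K f hf => le_antisymm ?_ ?_
  · simpa [h1] using lintegral_le_lintegral_add_mul_wassersteinDist_one μ ν hf
  · simpa [wassersteinDist_comm, h1] using lintegral_le_lintegral_add_mul_wassersteinDist_one ν μ hf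

section CramerWold

variable {E : Type*} [NormedAddCommGroup E] [InnerProductSpace ℝ E] [MeasurableSpace E]
  [BorelSpace E]

lemma charFun_smul_eq_charFun_map_inner (μ : Measure E) (θ : E) (t : ℝ) :
    charFun μ (t • θ) = charFun (μ.map fun x => inner ℝ θ x) t := by
  rw [charFun_eq_charFunDual_toDualMap, map_smul, ← charFun_map_eq_charFunDual_smul]
  rfl

lemma ext_of_ae_map_inner_eq [CompleteSpace E] [SecondCountableTopology E]
    {μ ν : Measure E} [IsProbabilityMeasure μ] [IsProbabilityMeasure ν] (σ : Measure E)
    (hσ : sphere (0 : E) 1 ⊆ σ.support)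
    (h : ∀ᵐ θ ∂σ, μ.map (fun x => inner ℝ θ x) = ν.map (fun x => inner ℝ θ x)) :
    μ = ν := by
  refine Measure.ext_of_charFun (funext fun ξ => ?_)
  rcases eq_or_ne ξ 0 with rfl | hξ
  · simp [charFun_zero]
  set T : Set E := {θ | charFun μ (‖ξ‖ • θ) = charFun ν (‖ξ‖ • θ)}
  have hT : IsClosed T := isClosed_eq (continuous_charFun.comp (continuous_const_smul _))
    (continuous_charFun.comp (continuous_const_smul _))
  have hσT : T ∈ ae σ := h.mono fun θ hθ => by
    simp only [charFun_smul_eq_charFun_map_inner, hθ]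
  have hunit : ‖ξ‖⁻¹ • ξ ∈ sphere (0 : E) 1 := by
    simp [norm_smul, norm_ne_zero_iff.2 hξ]
  have := Measure.support_subset_of_isClosed hT hσT (hσ hunit)
  simpa [T, smul_smul, mul_inv_cancel₀ (norm_ne_zero_iff.2 hξ)] using this

end CramerWold

lemma mem_support_of_map_eq {X : Type*} [TopologicalSpace X] [MeasurableSpace X]
    [BorelSpace X] {σ : Measure X} {f : X → X} (hf : Continuous f)
    (hσ : σ.map f = σ) {x : X} (hx : x ∈ σ.support) : f x ∈ σ.support := by
  rw [Measure.mem_support_iff_forall] at hx ⊢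
  intro U hU
  calc 0 < σ (f ⁻¹' U) := hx _ (hf.continuousAt.preimage_mem_nhds hU)
    _ ≤ σ.map f U := Measure.le_map_apply hf.measurable.aemeasurable U
    _ = σ U := by rw [hσ]

lemma sphere_subset_support_of_map_linearIsometryEquiv_eq {E : Type*} [NormedAddCommGroup E]
    [InnerProductSpace ℝ E] [MeasurableSpace E] [BorelSpace E] [SecondCountableTopology E]
    {σ : Measure E} (hsupp : σ (sphere (0 : E) 1) ≠ 0) (hinv : ∀ e : E ≃ₗᵢ[ℝ] E, σ.map e = σ) :
    sphere (0 : E) 1 ⊆ σ.support := by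
  obtain ⟨θ₀, hθ₀, hθ₀σ⟩ := Measure.nonempty_inter_support_of_pos (pos_iff_ne_zero.2 hsupp)
  intro θ hθ
  have hreflect := Submodule.reflection_sub (v := θ₀) (w := θ)
    (by rw [mem_sphere_zero_iff_norm.1 hθ₀, mem_sphere_zero_iff_norm.1 hθ])
  rw [← hreflect]
  exact mem_support_of_map_eq (LinearIsometryEquiv.continuous _) (hinv _) hθ₀σ

theorem sliced_wasserstein_separates_general
    (p : ℝ) (hp : 1 ≤ p) (d : ℕ)
    (σ : Measure (EuclideanSpace ℝ (Fin d)))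
    (hsupp : σ (Metric.sphere (0 : EuclideanSpace ℝ (Fin d)) 1) = 1)
    (hinv : ∀ e : EuclideanSpace ℝ (Fin d) ≃ₗᵢ[ℝ] EuclideanSpace ℝ (Fin d),
      σ.map e = σ)
    (μ ν : Measure (EuclideanSpace ℝ (Fin d)))
    [IsProbabilityMeasure μ] [IsProbabilityMeasure ν]
    (h0 : ∀ᵐ θ ∂σ,
      wassersteinDist p
        (μ.map fun x => (inner ℝ θ x : ℝ)) (ν.map fun x => (inner ℝ θ x : ℝ)) = 0) :
    μ = ν := by
  refine ext_of_ae_map_inner_eq σ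
    (sphere_subset_support_of_map_linearIsometryEquiv_eq (by simp [hsupp]) hinv) ?_
  filter_upwards [h0] with θ hθ
  have hinner : Measurable fun x : EuclideanSpace ℝ (Fin d) => inner ℝ θ x := by fun_prop
  have := Measure.isProbabilityMeasure_map (μ := μ) hinner.aemeasurable
  have := Measure.isProbabilityMeasure_map (μ := ν) hinner.aemeasurable
  exact eq_of_wassersteinDist_eq_zero hp hθ

/-- The sliced `p`-Wasserstein distance separates probability measures: if the `p`-Wasserstein
distance between the linear slices of `μ` and `ν` vanishes for almost every direction with
respect to the uniform measure on the unit sphere (characterized as a Borel probability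
measure concentrated on the unit sphere and invariant under every linear isometry of `ℝ^d`),
then `μ = ν`. -/
theorem sliced_wasserstein_separates
    (p : ℝ) (hp : 1 ≤ p) (d : ℕ)
    (σ : Measure (EuclideanSpace ℝ (Fin d))) [IsProbabilityMeasure σ]
    (hsupp : σ (Metric.sphere (0 : EuclideanSpace ℝ (Fin d)) 1) = 1)
    (hinv : ∀ e : EuclideanSpace ℝ (Fin d) ≃ₗᵢ[ℝ] EuclideanSpace ℝ (Fin d),
      σ.map e = σ)
    (μ ν : Measure (EuclideanSpace ℝ (Fin d)))
    [IsProbabilityMeasure μ] [IsProbabilityMeasure ν]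
    (hμ : ∫⁻ x, ENNReal.ofReal (‖x‖ ^ p) ∂μ < ∞)
    (hν : ∫⁻ x, ENNReal.ofReal (‖x‖ ^ p) ∂ν < ∞)
    (h0 : ∀ᵐ θ ∂σ,
      wassersteinDist p
        (μ.map fun x => (inner ℝ θ x : ℝ)) (ν.map fun x => (inner ℝ θ x : ℝ)) = 0) :
    μ = ν :=
  sliced_wasserstein_separates_general p hp d σ hsupp hinv μ ν h0
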